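/- arXiv:1207.3771 — 3 statements merged into one kernel-verified Lean document; each statement's English description precedes it below -/
import Mathlib

section
/- The extremal number for P_4 satisfies: ex(n, P_4) = n if n ≡ 0 (mod 3), and ex(n, P_4) = n - 1 if n ≡ 1 or 2 (mod 3), for all n ≥ 3. -/
open SimpleGraph

/-- `G` contains a copy of `H` (an injective graph homomorphism from `H` to `G`). -/
def Contains {V W : Type*} (G : SimpleGraph V) (H : SimpleGraph W) : Prop :=
  ∃ f : H →g G, Function.Injective f

/-- The subgraph of `K_N` formed by the edges of color `i` under the edge coloring `c`. -/
def colorClass {N k : ℕ} (c : Sym2 (Fin N) → Fin k) (i : Fin k) : SimpleGraph (Fin N) :=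
  SimpleGraph.fromRel (fun u v => c s(u, v) = i)

/-- Every 2-coloring of the edges of `K_N` yields a copy of `G₀` in color 0 or `G₁` in color 1. -/
def ramseyProp2 {V W : Type*} (N : ℕ) (G₀ : SimpleGraph V) (G₁ : SimpleGraph W) : Prop :=
  ∀ c : Sym2 (Fin N) → Fin 2,
    Contains (colorClass c 0) G₀ ∨ Contains (colorClass c 1) G₁

/-- Every 3-coloring of the edges of `K_N` yields a copy of `Gᵢ` in color `i` for some `i`. -/
def ramseyProp3 {V W X : Type*} (N : ℕ) (G₀ : SimpleGraph V) (G₁ : SimpleGraph W)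
    (G₂ : SimpleGraph X) : Prop :=
  ∀ c : Sym2 (Fin N) → Fin 3,
    Contains (colorClass c 0) G₀ ∨ Contains (colorClass c 1) G₁ ∨ Contains (colorClass c 2) G₂

/-- `k·K₂`: a matching consisting of `k` disjoint edges. -/
def matchingGraph (k : ℕ) : SimpleGraph (Fin k × Fin 2) :=
  SimpleGraph.fromRel (fun u v => u.1 = v.1)

open Finset

/-! If both ends of an edge `uv` of a `P₄`-free graph have degree at least 2, their further
neighbours must coincide, so `uv` lies in a triangle `uvw` that is the closed neighbourhood of
both `u` and `v`; in particular `deg u = deg v = 2`. Hence every edge satisfies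
`1 / deg u + 1 / deg v ≥ 1`, and summing over edges gives `|E| ≤ #{non-isolated vertices} ≤ n`,
strictly as soon as some vertex has degree at most 1. If there is no such vertex, the closed
neighbourhoods are triangles partitioning the vertices, so `3 ∣ n`. Disjoint triangles and a star
attain the bounds. -/

theorem contains_pathGraph_four_iff {V : Type*} {G : SimpleGraph V} :
    Contains G (pathGraph 4) ↔
      ∃ a b c d : V, G.Adj a b ∧ G.Adj b c ∧ G.Adj c d ∧ a ≠ c ∧ a ≠ d ∧ b ≠ d := by
  constructor
  · rintro ⟨f, hf⟩
    have adj : ∀ i j : Fin 4, i.val + 1 = j.val → G.Adj (f i) (f j) :=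
      fun i j h => f.map_rel (pathGraph_adj.mpr (Or.inl h))
    exact ⟨f 0, f 1, f 2, f 3, adj 0 1 rfl, adj 1 2 rfl, adj 2 3 rfl,
      hf.ne (by decide), hf.ne (by decide), hf.ne (by decide)⟩
  · rintro ⟨a, b, c, d, hab, hbc, hcd, hac, had, hbd⟩
    refine ⟨⟨![a, b, c, d], fun {i j} h => ?_⟩, fun i j h => ?_⟩
    · rw [pathGraph_adj] at h
      fin_cases i <;> fin_cases j <;> simp_all [G.adj_comm]
    · have := hab.ne; have := hbc.ne; have := hcd.ne
      fin_cases i <;> fin_cases j <;> simp_all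

section DegreeSums

variable {V : Type*} [Fintype V] (G : SimpleGraph V) [DecidableRel G.Adj]

theorem sum_sum_neighborFinset {M : Type*} [AddCommMonoid M] (f : V → M) :
    ∑ v, ∑ u ∈ G.neighborFinset v, f u = ∑ u, G.degree u • f u := by
  classical
  simp_rw [neighborFinset_eq_filter, sum_filter]
  rw [sum_comm]
  simp_rw [G.adj_comm _ (_ : V), ← sum_filter, ← neighborFinset_eq_filter,
    sum_const, card_neighborFinset_eq_degree]

theorem sum_sum_neighborFinset_inv_degree_add_inv_degree :
    ∑ v, ∑ u ∈ G.neighborFinset v, ((G.degree v : ℚ)⁻¹ + (G.degree u : ℚ)⁻¹) =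
      2 * #{v | G.degree v ≠ 0} := by
  have hcard : (#{v | G.degree v ≠ 0} : ℚ) = ∑ v, G.degree v • (G.degree v : ℚ)⁻¹ := by
    rw [card_filter]
    push_cast
    refine sum_congr rfl fun v _ => ?_
    split_ifs with h
    · rw [nsmul_eq_mul, mul_inv_cancel₀ (Nat.cast_ne_zero.mpr h)]
    · simp_all
  simp_rw [sum_add_distrib, sum_sum_neighborFinset, sum_const,
    card_neighborFinset_eq_degree, hcard]
  ring

theorem two_mul_card_edgeFinset_eq_sum_sum_neighborFinset :
    (2 * #G.edgeFinset : ℚ) = ∑ v, ∑ _u ∈ G.neighborFinset v, (1 : ℚ) := by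
  simp_rw [sum_const, card_neighborFinset_eq_degree, nsmul_one]
  exact_mod_cast (G.sum_degrees_eq_twice_card_edges).symm

end DegreeSums

namespace PathFourFree

variable {V : Type*} {G : SimpleGraph V}

theorem eq_or_eq_of_adj (hG : ¬ Contains G (pathGraph 4)) {v a b x : V} (hva : G.Adj v a)
    (hvb : G.Adj v b) (hab : a ≠ b) (hax : G.Adj a x) : x = v ∨ x = b := by
  by_contra! h
  exact hG (contains_pathGraph_four_iff.mpr
    ⟨x, a, v, b, hax.symm, hva.symm, hvb, h.1, h.2, hab⟩)

variable [Fintype V] [DecidableRel G.Adj]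

theorem exists_neighborFinset_eq_pair [DecidableEq V] (hG : ¬ Contains G (pathGraph 4))
    {u v : V} (huv : G.Adj u v) (hu : 2 ≤ G.degree u) (hv : 2 ≤ G.degree v) :
    ∃ w, G.Adj u w ∧ G.Adj v w ∧ G.neighborFinset u = {v, w} ∧ G.neighborFinset v = {u, w} := by
  obtain ⟨w, hw, hwv⟩ := exists_mem_ne (G.card_neighborFinset_eq_degree u ▸ hu) v
  obtain ⟨y, hy, hyu⟩ := exists_mem_ne (G.card_neighborFinset_eq_degree v ▸ hv) u
  rw [mem_neighborFinset] at hw hy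
  have hvw : G.Adj v w := (eq_or_eq_of_adj hG huv hw hwv.symm hy).resolve_left hyu ▸ hy
  refine ⟨w, hw, hvw, ?_, ?_⟩ <;> ext x <;>
    simp only [mem_neighborFinset, mem_insert, mem_singleton]
  · exact ⟨eq_or_eq_of_adj hG huv.symm hvw hw.ne, by rintro (rfl | rfl) <;> assumption⟩
  · refine ⟨eq_or_eq_of_adj hG huv hw hwv.symm, ?_⟩
    rintro (rfl | rfl)
    exacts [huv.symm, hvw]

theorem degree_eq_two_of_adj (hG : ¬ Contains G (pathGraph 4)) {u v : V} (huv : G.Adj u v)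
    (hu : 2 ≤ G.degree u) (hv : 2 ≤ G.degree v) : G.degree u = 2 := by
  classical
  obtain ⟨w, -, hvw, hNu, -⟩ := exists_neighborFinset_eq_pair hG huv hu hv
  rw [← card_neighborFinset_eq_degree, hNu, card_pair hvw.ne]

theorem one_le_inv_degree_add_inv_degree (hG : ¬ Contains G (pathGraph 4)) {u v : V}
    (huv : G.Adj u v) : 1 ≤ (G.degree u : ℚ)⁻¹ + (G.degree v : ℚ)⁻¹ := by
  have hu := huv.degree_pos_left
  have hv := huv.degree_pos_right
  rcases (by omega : G.degree u = 1 ∨ G.degree v = 1 ∨ (2 ≤ G.degree u ∧ 2 ≤ G.degree v))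
    with h | h | ⟨hu2, hv2⟩
  · rw [h]; simp only [Nat.cast_one, inv_one, le_add_iff_nonneg_right]; positivity
  · rw [h]; simp only [Nat.cast_one, inv_one, le_add_iff_nonneg_left]; positivity
  · rw [degree_eq_two_of_adj hG huv hu2 hv2, degree_eq_two_of_adj hG huv.symm hv2 hu2]
    norm_num

theorem card_edgeFinset_le_card_nonisolated (hG : ¬ Contains G (pathGraph 4)) :
    #G.edgeFinset ≤ #{v | G.degree v ≠ 0} := by
  have key : (2 * #G.edgeFinset : ℚ) ≤ 2 * #{v | G.degree v ≠ 0} := by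
    rw [two_mul_card_edgeFinset_eq_sum_sum_neighborFinset,
      ← sum_sum_neighborFinset_inv_degree_add_inv_degree]
    gcongr with v _ u hu
    exact one_le_inv_degree_add_inv_degree hG ((G.mem_neighborFinset v u).mp hu)
  exact_mod_cast le_of_mul_le_mul_left key two_pos

theorem card_edgeFinset_lt_card_nonisolated (hG : ¬ Contains G (pathGraph 4)) {v : V}
    (hv : G.degree v = 1) : #G.edgeFinset < #{v | G.degree v ≠ 0} := by
  obtain ⟨u, hu⟩ := G.degree_pos_iff_exists_adj v |>.mp (hv ▸ one_pos)
  have hweight : ∀ w, ∀ x ∈ G.neighborFinset w, 1 ≤ (G.degree w : ℚ)⁻¹ + (G.degree x : ℚ)⁻¹ :=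
    fun w x hx => one_le_inv_degree_add_inv_degree hG ((G.mem_neighborFinset w x).mp hx)
  have hvu : 1 < (G.degree v : ℚ)⁻¹ + (G.degree u : ℚ)⁻¹ := by
    rw [hv, Nat.cast_one, inv_one, lt_add_iff_pos_right]
    exact inv_pos.mpr (Nat.cast_pos.mpr hu.degree_pos_right)
  have key : (2 * #G.edgeFinset : ℚ) < 2 * #{v | G.degree v ≠ 0} := by
    rw [two_mul_card_edgeFinset_eq_sum_sum_neighborFinset,
      ← sum_sum_neighborFinset_inv_degree_add_inv_degree]
    refine sum_lt_sum (fun w _ => sum_le_sum (hweight w)) ⟨v, mem_univ v, ?_⟩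
    exact sum_lt_sum (hweight v) ⟨u, (G.mem_neighborFinset v u).mpr hu, hvu⟩
  exact_mod_cast lt_of_mul_lt_mul_left key zero_le_two

theorem card_edgeFinset_le_card (hG : ¬ Contains G (pathGraph 4)) :
    #G.edgeFinset ≤ Fintype.card V :=
  (card_edgeFinset_le_card_nonisolated hG).trans (card_le_univ _)

theorem card_edgeFinset_lt_card (hG : ¬ Contains G (pathGraph 4)) {v : V}
    (hv : G.degree v ≤ 1) : #G.edgeFinset < Fintype.card V := by
  rcases Nat.le_one_iff_eq_zero_or_eq_one.mp hv with hv | hv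
  · refine (card_edgeFinset_le_card_nonisolated hG).trans_lt ?_
    exact card_lt_univ_of_notMem (x := v) (by simp [hv])
  · exact (card_edgeFinset_lt_card_nonisolated hG hv).trans_le (card_le_univ _)

theorem insert_neighborFinset_eq_of_adj [DecidableEq V] (hG : ¬ Contains G (pathGraph 4))
    (hd : ∀ v, 2 ≤ G.degree v) {u v : V} (huv : G.Adj u v) :
    insert u (G.neighborFinset u) = insert v (G.neighborFinset v) := by
  obtain ⟨w, -, -, hNu, hNv⟩ := exists_neighborFinset_eq_pair hG huv (hd u) (hd v)
  rw [hNu, hNv, insert_comm]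

theorem card_insert_neighborFinset [DecidableEq V] (hG : ¬ Contains G (pathGraph 4))
    (hd : ∀ v, 2 ≤ G.degree v) (v : V) : #(insert v (G.neighborFinset v)) = 3 := by
  obtain ⟨u, hvu⟩ := G.degree_pos_iff_exists_adj v |>.mp (two_pos.trans_le (hd v))
  obtain ⟨w, hvw, huw, hNv, -⟩ := exists_neighborFinset_eq_pair hG hvu (hd v) (hd u)
  rw [hNv, card_insert_of_notMem (by simp [hvu.ne, hvw.ne]), card_pair huw.ne]

theorem three_dvd_card (hG : ¬ Contains G (pathGraph 4)) (hd : ∀ v, 2 ≤ G.degree v) :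
    3 ∣ Fintype.card V := by
  classical
  set N : V → Finset V := fun v => insert v (G.neighborFinset v)
  have hfiber : ∀ v, ({u | N u = N v} : Finset V) = N v := by
    intro v
    ext u
    rw [mem_filter, and_iff_right (mem_univ u)]
    refine ⟨fun h => h ▸ mem_insert_self u _, fun hu => ?_⟩
    rcases mem_insert.mp hu with rfl | hvu
    · rfl
    · exact insert_neighborFinset_eq_of_adj hG hd ((G.mem_neighborFinset v u).mp hvu).symm
  rw [← card_univ, card_eq_sum_card_image N]
  refine dvd_sum fun s hs => ?_
  obtain ⟨v, -, rfl⟩ := mem_image.mp hs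
  rw [hfiber, card_insert_neighborFinset hG hd]

end PathFourFree

theorem starGraph_not_contains_pathGraph_four {V : Type*} (r : V) :
    ¬ Contains (starGraph r) (pathGraph 4) := by
  rw [contains_pathGraph_four_iff]
  rintro ⟨a, b, c, d, hab, hbc, hcd, hac, had, hbd⟩
  simp only [starGraph_adj] at hab hbc hcd
  grind

theorem ncard_edgeSet_starGraph {V : Type*} [Fintype V] [DecidableEq V] (r : V) :
    (starGraph r).edgeSet.ncard = Fintype.card V - 1 := by
  rw [← coe_edgeFinset, Set.ncard_coe_finset, ← (isTree_starGraph r).card_edgeFinset]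
  rfl

def disjointTriangles (n : ℕ) : SimpleGraph (Fin n) :=
  fromRel fun u v => u.val / 3 = v.val / 3

instance (n : ℕ) : DecidableRel (disjointTriangles n).Adj :=
  fun _ _ => instDecidableAnd

theorem disjointTriangles_adj {n : ℕ} {u v : Fin n} :
    (disjointTriangles n).Adj u v ↔ u ≠ v ∧ u.val / 3 = v.val / 3 := by
  simp [disjointTriangles, eq_comm]

theorem disjointTriangles_not_contains_pathGraph_four (n : ℕ) :
    ¬ Contains (disjointTriangles n) (pathGraph 4) := by
  rw [contains_pathGraph_four_iff]
  rintro ⟨a, b, c, d, hab, hbc, hcd, hac, had, hbd⟩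
  simp only [disjointTriangles_adj, ne_eq, Fin.ext_iff] at hab hbc hcd hac had hbd
  omega

theorem degree_disjointTriangles {n : ℕ} (h3 : 3 ∣ n) (v : Fin n) :
    (disjointTriangles n).degree v = 2 := by
  -- the other two elements of `v`'s block `{3q, 3q + 1, 3q + 2}`
  have h1 : 3 * (v.val / 3) + (v.val % 3 + 1) % 3 < n := by omega
  have h2 : 3 * (v.val / 3) + (v.val % 3 + 2) % 3 < n := by omega
  have hN : (disjointTriangles n).neighborFinset v = {⟨_, h1⟩, ⟨_, h2⟩} := by
    ext u
    simp only [mem_neighborFinset, disjointTriangles_adj, mem_insert,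
      mem_singleton, Fin.ext_iff, ne_eq]
    omega
  rw [← card_neighborFinset_eq_degree, hN, card_pair (by simp [Fin.ext_iff]; omega)]

theorem ncard_edgeSet_disjointTriangles {n : ℕ} (h3 : 3 ∣ n) :
    (disjointTriangles n).edgeSet.ncard = n := by
  have hsum := sum_degrees_eq_twice_card_edges (disjointTriangles n)
  simp only [degree_disjointTriangles h3, sum_const, card_univ, Fintype.card_fin,
    smul_eq_mul] at hsum
  rw [← coe_edgeFinset, Set.ncard_coe_finset]
  omega

theorem extremal_number_P4 (n : ℕ) (hn : 3 ≤ n) :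
    IsGreatest {m | ∃ G : SimpleGraph (Fin n),
        ¬ Contains G (SimpleGraph.pathGraph 4) ∧ G.edgeSet.ncard = m}
      (if n % 3 = 0 then n else n - 1) := by
  refine ⟨?_, ?_⟩
  · split_ifs with h3
    · exact ⟨disjointTriangles n, disjointTriangles_not_contains_pathGraph_four n,
        ncard_edgeSet_disjointTriangles (Nat.dvd_of_mod_eq_zero h3)⟩
    · exact ⟨starGraph (⟨0, by omega⟩ : Fin n), starGraph_not_contains_pathGraph_four _,
        by rw [ncard_edgeSet_starGraph, Fintype.card_fin]⟩
  · rintro m ⟨G, hG, rfl⟩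
    classical
    have hle := PathFourFree.card_edgeFinset_le_card hG
    rw [Fintype.card_fin] at hle
    rw [← coe_edgeFinset, Set.ncard_coe_finset]
    split_ifs with h3
    · exact hle
    · obtain ⟨v, hv⟩ : ∃ v, G.degree v ≤ 1 := by
        by_contra! hd
        exact h3 (Nat.mod_eq_zero_of_dvd (by simpa using PathFourFree.three_dvd_card hG hd))
      have hlt := PathFourFree.card_edgeFinset_lt_card hG hv
      rw [Fintype.card_fin] at hlt
      omega
end

section
/- The extremal number for P_6 satisfies: ex(n, P_6) = 2n if n ≡ 0 (mod 5), ex(n, P_6) = 2n - 2 if n ≡ 1 or 4 (mod 5), and ex(n, P_6) = 2n - 3 if n ≡ 2 or 3 (mod 5), for all n ≥ 3. -/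
/-!
Split off connected components. A component on `k ≤ 5` vertices has at most `k.choose 2` edges,
and a connected `P₆`-free graph on `k ≥ 6` vertices has at most `2k - 3` edges; since the target
function is superadditive, the upper bound follows by induction on the number of vertices.

For the connected bound take a longest path. If it is `a b c d e`, an off-path vertex is
adjacent to neither end nor to two consecutive inner vertices, so it sends at most two edges to
the path; one with an off-path neighbour is adjacent to neither `b` nor `d`, so the off-path
components are stars hanging from `c` and the off-path vertices have total degree at most
`2(n - 5)`. By connectivity some off-path vertex is attached to `b`, `c` or `d`, which rules out
three of the ten pairs inside the path, so `2e ≤ 14 + 2(n - 5) + 2(n - 5)`. Shorter longest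
paths give fewer edges.

Disjoint copies of `K₅` together with a clique on the `n % 5` remaining vertices attain the
bound.
-/

open SimpleGraph

open Finset

def exPathSix (n : ℕ) : ℕ :=
  if n % 5 = 0 then 2 * n else if n % 5 = 1 ∨ n % 5 = 4 then 2 * n - 2 else 2 * n - 3

theorem exPathSix_succ (n : ℕ) : exPathSix (n + 1) = exPathSix n + n % 5 := by
  unfold exPathSix; split_ifs <;> omega

theorem exPathSix_eq_sum_mod (n : ℕ) : exPathSix n = ∑ j ∈ range n, j % 5 := by
  induction n with
  | zero => rfl
  | succ n ih => rw [exPathSix_succ, sum_range_succ, ih]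

theorem exPathSix_add_le {a b : ℕ} (ha : 1 ≤ a) (hb : 1 ≤ b) :
    exPathSix a + exPathSix b ≤ exPathSix (a + b) := by
  unfold exPathSix; split_ifs <;> omega

theorem choose_two_le_exPathSix {n : ℕ} (hn : n ≤ 5) : n.choose 2 ≤ exPathSix n := by
  interval_cases n <;> decide

theorem two_mul_sub_three_le_exPathSix {n : ℕ} (hn : 6 ≤ n) : 2 * n - 3 ≤ exPathSix n := by
  unfold exPathSix; split_ifs <;> omega

namespace SimpleGraph

variable {V : Type*} {G : SimpleGraph V}

theorem contains_pathGraph_of_isChain {l : List V} (hc : l.IsChain G.Adj) (hl : l.Nodup) :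
    Contains G (pathGraph l.length) := by
  refine ⟨⟨fun i => l[i], fun {i j} hij => ?_⟩, fun i j h => Fin.ext (hl.getElem_inj_iff.mp h)⟩
  have step := List.isChain_iff_getElem.mp hc
  rcases pathGraph_adj.mp hij with h | h
  · simpa [← h] using step i (by omega)
  · simpa [← h] using (step j (by omega)).symm

theorem Contains.of_induce {W : Type*} {H : SimpleGraph W} {s : Set V}
    (h : Contains (G.induce s) H) : Contains G H :=
  let ⟨f, hf⟩ := h
  ⟨(Embedding.induce s).toHom.comp f, Subtype.val_injective.comp hf⟩

theorem degree_le_one_of_not_contains_pathGraph_three [Fintype V] [DecidableRel G.Adj]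
    (h3 : ¬ Contains G (pathGraph 3)) (v : V) : G.degree v ≤ 1 := by
  by_contra! hv
  obtain ⟨y, hy, z, hz, hyz⟩ := one_lt_card.mp hv
  rw [mem_neighborFinset] at hy hz
  exact h3 (contains_pathGraph_of_isChain (l := [y, v, z]) (by simp [hy.symm, hz])
    (by simp [hy.ne', hz.ne, hyz]))

theorem degree_le_length_of_forall_adj_mem [Fintype V] [DecidableRel G.Adj] [DecidableEq V]
    {v : V} {l : List V} (h : ∀ w, G.Adj v w → w ∈ l) : G.degree v ≤ l.length :=
  (card_le_card fun w hw => List.mem_toFinset.mpr (h w ((mem_neighborFinset ..).mp hw))).trans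
    l.toFinset_card_le

theorem sum_degree_le_of_degree_le_one_of_not_mem [Fintype V] [DecidableRel G.Adj]
    {l : List V} (hl : l.Nodup) (h : ∀ x ∉ l, G.degree x ≤ 1) :
    ∑ v, G.degree v ≤ (l.map fun v => G.degree v).sum + (Fintype.card V - l.length) := by
  classical
  rw [← sum_add_sum_compl l.toFinset, List.sum_toFinset _ hl, ← List.toFinset_card_of_nodup hl,
    ← card_compl]
  gcongr
  exact (sum_le_card_nsmul _ _ 1 fun x hx => h x (by simpa using hx)).trans (by simp)

/-- Each vertex of degree one is a pendant neighbour of a single vertex, so it can pay for one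
unit of degree above two at that neighbour. -/
theorem sum_degree_le_two_mul_card_of_pendant [Fintype V] [DecidableRel G.Adj] (X : Finset V)
    (hX : ∀ x ∈ X, 3 ≤ G.degree x → G.degree x ≤ 2 + #{y ∈ X | G.degree y = 1 ∧ G.Adj x y}) :
    ∑ x ∈ X, G.degree x ≤ 2 * #X := by
  set D := {y ∈ X | G.degree y = 1}
  have hpendant : ∑ x ∈ X, #{y ∈ D | G.Adj x y} ≤ #D := calc
    _ = ∑ y ∈ D, #{x ∈ X | G.Adj x y} :=
      sum_card_bipartiteAbove_eq_sum_card_bipartiteBelow G.Adj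
    _ ≤ ∑ y ∈ D, 1 := sum_le_sum fun y hy => by
      refine (card_le_card fun x hx => ?_).trans (mem_filter.mp hy).2.le
      exact (mem_neighborFinset ..).mpr (mem_filter.mp hx).2.symm
    _ = #D := by simp
  have hvertex : ∀ x ∈ X, G.degree x + (if G.degree x = 1 then 1 else 0) ≤
      2 + #{y ∈ D | G.Adj x y} := fun x hx => by
    rw [filter_filter]
    have := hX x hx
    split_ifs <;> omega
  have := sum_le_sum hvertex
  rw [sum_add_distrib, ← card_filter, sum_add_distrib, sum_const, smul_eq_mul] at this
  change _ + #D ≤ _ at this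
  omega

theorem Preconnected.exists_path_avoiding_to_adj_mem (hG : G.Preconnected) {P : Set V}
    {q₀ x : V} (hq₀ : q₀ ∈ P) (hx : x ∉ P) :
    ∃ p q, q ∈ P ∧ G.Adj p q ∧ ∃ w : G.Walk p x, w.IsPath ∧ ∀ z ∈ w.support, z ∉ P := by
  classical
  set T := {z | ∃ w : G.Walk x z, ∀ y ∈ w.support, y ∉ P}
  have hxT : x ∈ T := ⟨.nil, by simpa using hx⟩
  have hq₀T : q₀ ∉ T := fun ⟨w, hw⟩ => hw q₀ w.end_mem_support hq₀
  obtain ⟨d, -, ⟨w, hw⟩, hd⟩ := (hG x q₀).some.exists_boundary_dart T hxT hq₀T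
  by_cases hq : d.snd ∈ P
  · exact ⟨d.fst, d.snd, hq, d.adj, w.reverse.bypass, w.reverse.bypass_isPath,
      fun z hz => hw z (by simpa using w.reverse.support_bypass_subset_support hz)⟩
  · refine absurd ⟨w.concat d.adj, fun z hz => ?_⟩ hd
    rw [Walk.support_concat, List.mem_append, List.mem_singleton] at hz
    rcases hz with hz | rfl
    exacts [hw z hz, hq]

theorem Preconnected.exists_adj_adj_mem_of_adj_not_mem (hG : G.Preconnected) {P : Set V}
    {q₀ x y : V} (hq₀ : q₀ ∈ P) (hx : x ∉ P) (hy : y ∉ P) (hxy : G.Adj x y) :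
    ∃ w p q, w ∉ P ∧ p ∉ P ∧ q ∈ P ∧ G.Adj w p ∧ G.Adj p q := by
  obtain ⟨p, q, hq, hpq, w, -, hw⟩ := hG.exists_path_avoiding_to_adj_mem hq₀ hx
  cases w with
  | nil => exact ⟨y, x, q, hy, hx, hq, hxy.symm, hpq⟩
  | cons h w => exact ⟨_, p, q, hw _ (by simp), hw p (by simp), hq, h.symm, hpq⟩

theorem eq_of_adj_of_pathThree (hG : G.Preconnected) {a b c x y : V} (hab : G.Adj a b)
    (hbc : G.Adj b c) (hP : [a, b, c].Nodup) (h4 : ¬ Contains G (pathGraph 4))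
    (hx : x ∉ [a, b, c]) (hxy : G.Adj x y) : y = b := by
  by_cases hy : y ∈ [a, b, c]
  · simp only [List.mem_cons, List.not_mem_nil, or_false] at hy
    rcases hy with rfl | rfl | rfl
    · exact (h4 (contains_pathGraph_of_isChain (l := [x, y, b, c])
        (by simp [hxy, hab, hbc]) (by grind))).elim
    · rfl
    · exact (h4 (contains_pathGraph_of_isChain (l := [x, y, b, a])
        (by simp [hxy, hbc.symm, hab.symm]) (by grind))).elim
  obtain ⟨w, p, q, hw, hp, hq, hwp, hpq⟩ := hG.exists_adj_adj_mem_of_adj_not_mem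
    (P := {z | z ∈ [a, b, c]}) (q₀ := a) (by simp) hx hy hxy
  simp only [Set.mem_ofPred_eq, List.mem_cons, List.not_mem_nil, or_false] at hw hp hq
  have := hwp.ne
  exfalso
  rcases hq with rfl | rfl | rfl
  · exact h4 (contains_pathGraph_of_isChain (l := [w, p, q, b])
      (by simp [hwp, hpq, hab]) (by grind))
  · exact h4 (contains_pathGraph_of_isChain (l := [w, p, q, c])
      (by simp [hwp, hpq, hbc]) (by grind))
  · exact h4 (contains_pathGraph_of_isChain (l := [w, p, q, b])
      (by simp [hwp, hpq, hbc.symm]) (by grind))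

theorem sum_degree_le_of_pathThree [Fintype V] [DecidableRel G.Adj] (hG : G.Preconnected)
    {a b c : V} (hab : G.Adj a b) (hbc : G.Adj b c) (hP : [a, b, c].Nodup)
    (h4 : ¬ Contains G (pathGraph 4)) : ∑ v, G.degree v ≤ 4 * Fintype.card V - 6 := by
  have hsum := sum_degree_le_of_degree_le_one_of_not_mem hP fun x hx =>
    card_le_one.mpr fun y hy z hz => by
      rw [mem_neighborFinset] at hy hz
      rw [eq_of_adj_of_pathThree hG hab hbc hP h4 hx hy,
        eq_of_adj_of_pathThree hG hab hbc hP h4 hx hz]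
  have ha := G.degree_lt_card_verts a
  have hb := G.degree_lt_card_verts b
  have hc := G.degree_lt_card_verts c
  have hn := hP.length_le_card
  simp only [List.map_cons, List.map_nil, List.sum_cons, List.sum_nil, List.length_cons,
    List.length_nil] at hsum hn
  omega

theorem eq_or_eq_of_adj_of_pathFour (hG : G.Preconnected) {a b c d x y : V} (hab : G.Adj a b)
    (hbc : G.Adj b c) (hcd : G.Adj c d) (hP : [a, b, c, d].Nodup)
    (h5 : ¬ Contains G (pathGraph 5)) (hx : x ∉ [a, b, c, d]) (hxy : G.Adj x y) :
    y = b ∨ y = c := by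
  by_cases hy : y ∈ [a, b, c, d]
  · simp only [List.mem_cons, List.not_mem_nil, or_false] at hy
    rcases hy with rfl | rfl | rfl | rfl
    · exact (h5 (contains_pathGraph_of_isChain (l := [x, y, b, c, d])
        (by simp [hxy, hab, hbc, hcd]) (by grind))).elim
    · exact .inl rfl
    · exact .inr rfl
    · exact (h5 (contains_pathGraph_of_isChain (l := [x, y, c, b, a])
        (by simp [hxy, hcd.symm, hbc.symm, hab.symm]) (by grind))).elim
  obtain ⟨w, p, q, hw, hp, hq, hwp, hpq⟩ := hG.exists_adj_adj_mem_of_adj_not_mem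
    (P := {z | z ∈ [a, b, c, d]}) (q₀ := a) (by simp) hx hy hxy
  simp only [Set.mem_ofPred_eq, List.mem_cons, List.not_mem_nil, or_false] at hw hp hq
  have := hwp.ne
  exfalso
  rcases hq with rfl | rfl | rfl | rfl
  · exact h5 (contains_pathGraph_of_isChain (l := [p, q, b, c, d])
      (by simp [hpq, hab, hbc, hcd]) (by grind))
  · exact h5 (contains_pathGraph_of_isChain (l := [w, p, q, c, d])
      (by simp [hwp, hpq, hbc, hcd]) (by grind))
  · exact h5 (contains_pathGraph_of_isChain (l := [w, p, q, b, a])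
      (by simp [hwp, hpq, hbc.symm, hab.symm]) (by grind))
  · exact h5 (contains_pathGraph_of_isChain (l := [p, q, c, b, a])
      (by simp [hpq, hcd.symm, hbc.symm, hab.symm]) (by grind))

theorem not_adj_and_adj_of_pathFour {a b c d x : V} (hab : G.Adj a b) (hcd : G.Adj c d)
    (hP : [a, b, c, d].Nodup) (h5 : ¬ Contains G (pathGraph 5)) (hx : x ∉ [a, b, c, d]) :
    ¬ (G.Adj x b ∧ G.Adj x c) := fun ⟨hxb, hxc⟩ =>
  h5 (contains_pathGraph_of_isChain (l := [a, b, x, c, d])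
    (by simp [hab, hxb.symm, hxc, hcd]) (by grind))

theorem sum_degree_le_of_pathFour [Fintype V] [DecidableRel G.Adj] (hG : G.Preconnected)
    {a b c d : V} (hab : G.Adj a b) (hbc : G.Adj b c) (hcd : G.Adj c d)
    (hP : [a, b, c, d].Nodup) (h5 : ¬ Contains G (pathGraph 5)) :
    ∑ v, G.degree v ≤ 3 * Fintype.card V := by
  classical
  have hout : ∀ x ∉ [a, b, c, d], ∀ y, G.Adj x y → y = b ∨ y = c := fun x hx y =>
    eq_or_eq_of_adj_of_pathFour hG hab hbc hcd hP h5 hx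
  have hsum := sum_degree_le_of_degree_le_one_of_not_mem hP fun x hx =>
    card_le_one.mpr fun y hy z hz => by
      rw [mem_neighborFinset] at hy hz
      have := not_adj_and_adj_of_pathFour hab hcd hP h5 hx
      rcases hout x hx y hy with rfl | rfl <;> rcases hout x hx z hz with rfl | rfl <;> tauto
  have hend : ∀ v ∈ [a, d], G.degree v ≤ 3 := by
    intro v hv
    have hv' : v ∈ [a, b, c, d] := by simp only [List.mem_cons, List.not_mem_nil] at hv ⊢; tauto
    refine (degree_le_length_of_forall_adj_mem (G := G) (l := [a, b, c, d].erase v)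
      fun w hvw => ?_).trans (by simp [List.length_erase_of_mem hv'])
    by_cases hw : w ∈ [a, b, c, d]
    · exact (List.mem_erase_of_ne hvw.ne').mpr hw
    · have := hout w hw v hvw.symm
      grind
  have ha := hend a (by simp)
  have hb := G.degree_lt_card_verts b
  have hc := G.degree_lt_card_verts c
  have hd := hend d (by simp)
  have hn := hP.length_le_card
  simp only [List.map_cons, List.map_nil, List.sum_cons, List.sum_nil, List.length_cons,
    List.length_nil] at hsum hn
  omega

section PathFive

variable {a b c d e x y z : V}

theorem not_adj_head_of_pathFive (hab : G.Adj a b) (hbc : G.Adj b c) (hcd : G.Adj c d)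
    (hde : G.Adj d e) (hP : [a, b, c, d, e].Nodup) (h6 : ¬ Contains G (pathGraph 6))
    (hx : x ∉ [a, b, c, d, e]) : ¬ G.Adj x a := fun hxa =>
  h6 (contains_pathGraph_of_isChain (l := [x, a, b, c, d, e])
    (by simp [hxa, hab, hbc, hcd, hde]) (by grind))

theorem not_adj_last_of_pathFive (hab : G.Adj a b) (hbc : G.Adj b c) (hcd : G.Adj c d)
    (hde : G.Adj d e) (hP : [a, b, c, d, e].Nodup) (h6 : ¬ Contains G (pathGraph 6))
    (hx : x ∉ [a, b, c, d, e]) : ¬ G.Adj x e :=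
  not_adj_head_of_pathFive hde.symm hcd.symm hbc.symm hab.symm (by grind) h6 (by grind)

theorem not_adj_and_adj_of_pathFive (hab : G.Adj a b) (hcd : G.Adj c d) (hde : G.Adj d e)
    (hP : [a, b, c, d, e].Nodup) (h6 : ¬ Contains G (pathGraph 6))
    (hx : x ∉ [a, b, c, d, e]) : ¬ (G.Adj x b ∧ G.Adj x c) := fun ⟨hxb, hxc⟩ =>
  h6 (contains_pathGraph_of_isChain (l := [a, b, x, c, d, e])
    (by simp [hab, hxb.symm, hxc, hcd, hde]) (by grind))

theorem not_adj_second_of_pathFive_of_adj_not_mem (hbc : G.Adj b c) (hcd : G.Adj c d)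
    (hde : G.Adj d e) (hP : [a, b, c, d, e].Nodup) (h6 : ¬ Contains G (pathGraph 6))
    (hx : x ∉ [a, b, c, d, e]) (hy : y ∉ [a, b, c, d, e]) (hxy : G.Adj x y) : ¬ G.Adj x b :=
  fun hxb => h6 (contains_pathGraph_of_isChain (l := [y, x, b, c, d, e])
    (by simp [hxy.symm, hxb, hbc, hcd, hde]) (by have := hxy.ne; grind))

theorem not_adj_fourth_of_pathFive_of_adj_not_mem (hab : G.Adj a b) (hbc : G.Adj b c)
    (hcd : G.Adj c d) (hP : [a, b, c, d, e].Nodup) (h6 : ¬ Contains G (pathGraph 6))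
    (hx : x ∉ [a, b, c, d, e]) (hy : y ∉ [a, b, c, d, e]) (hxy : G.Adj x y) : ¬ G.Adj x d :=
  not_adj_second_of_pathFive_of_adj_not_mem hcd.symm hbc.symm hab.symm (a := e) (by grind) h6
    (by grind) (by grind) hxy

theorem eq_center_or_not_mem_of_pathFive_of_adj_not_mem (hab : G.Adj a b) (hbc : G.Adj b c)
    (hcd : G.Adj c d) (hde : G.Adj d e) (hP : [a, b, c, d, e].Nodup)
    (h6 : ¬ Contains G (pathGraph 6)) (hx : x ∉ [a, b, c, d, e]) (hy : y ∉ [a, b, c, d, e])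
    (hxy : G.Adj x y) (hxz : G.Adj x z) : z = c ∨ z ∉ [a, b, c, d, e] := by
  by_contra! h
  obtain ⟨hzc, hz⟩ := h
  simp only [List.mem_cons, List.not_mem_nil, or_false] at hz
  rcases hz with rfl | rfl | rfl | rfl | rfl
  · exact not_adj_head_of_pathFive hab hbc hcd hde hP h6 hx hxz
  · exact not_adj_second_of_pathFive_of_adj_not_mem hbc hcd hde hP h6 hx hy hxy hxz
  · exact hzc rfl
  · exact not_adj_fourth_of_pathFive_of_adj_not_mem hab hbc hcd hP h6 hx hy hxy hxz
  · exact not_adj_last_of_pathFive hab hbc hcd hde hP h6 hx hxz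

theorem adj_center_or_adj_center_of_pathFive (hG : G.Preconnected) (hab : G.Adj a b)
    (hbc : G.Adj b c) (hcd : G.Adj c d) (hde : G.Adj d e) (hP : [a, b, c, d, e].Nodup)
    (h6 : ¬ Contains G (pathGraph 6)) (hx : x ∉ [a, b, c, d, e]) (hy : y ∉ [a, b, c, d, e])
    (hxy : G.Adj x y) : G.Adj x c ∨ G.Adj y c := by
  by_contra! hc
  obtain ⟨hxc, hyc⟩ := hc
  obtain ⟨p, q, hq, hpq, w, hw, hout⟩ := hG.exists_path_avoiding_to_adj_mem
    (P := {z | z ∈ [a, b, c, d, e]}) (q₀ := a) (by simp) hx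
  have hp : p ∉ [a, b, c, d, e] := hout p w.start_mem_support
  obtain ⟨r, hr, hpr⟩ : ∃ r ∉ [a, b, c, d, e], G.Adj p r := by
    cases w with
    | nil => exact ⟨y, hy, hxy⟩
    | cons h w => exact ⟨_, hout _ (by simp), h⟩
  obtain rfl : q = c := (eq_center_or_not_mem_of_pathFive_of_adj_not_mem hab hbc hcd hde hP h6
    hp hr hpr hpq).resolve_right (not_not.mpr hq)
  cases w with
  | nil => exact hxc hpq
  | @cons _ u _ hpu w =>
    cases w with
    | nil =>
      exact h6 (contains_pathGraph_of_isChain (l := [y, x, p, q, d, e])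
        (by simp [hxy.symm, hpu.symm, hpq, hcd, hde])
        (by have := hpu.ne; have := hxy.ne; have : y ≠ p := fun h => hyc (h ▸ hpq); grind))
    | @cons _ v _ huv w =>
      rw [Walk.cons_isPath_iff, Walk.support_cons, List.mem_cons, not_or] at hw
      have hu := hout u (by simp)
      have hv := hout v (by simp)
      simp only [Set.mem_ofPred_eq] at hu hv
      have : v ≠ p := fun h => hw.2.2 (h ▸ w.start_mem_support)
      exact h6 (contains_pathGraph_of_isChain (l := [v, u, p, q, d, e])
        (by simp [huv.symm, hpu.symm, hpq, hcd, hde])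
        (by have := hpu.ne; have := huv.ne; grind))

theorem card_filter_adj_le_two_of_pathFive [DecidableEq V] [DecidableRel G.Adj]
    (hab : G.Adj a b) (hbc : G.Adj b c) (hcd : G.Adj c d) (hde : G.Adj d e)
    (hP : [a, b, c, d, e].Nodup) (h6 : ¬ Contains G (pathGraph 6)) (hx : x ∉ [a, b, c, d, e]) :
    #{w ∈ [a, b, c, d, e].toFinset | G.Adj x w} ≤ 2 := by
  have hbc' := not_adj_and_adj_of_pathFive hab hcd hde hP h6 hx
  have hdc' := not_adj_and_adj_of_pathFive hde.symm hbc.symm hab.symm (a := e) (x := x)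
    (by grind) h6 (by grind)
  rw [card_filter, List.sum_toFinset _ hP]
  simp only [List.map_cons, List.map_nil, List.sum_cons, List.sum_nil,
    if_neg (not_adj_head_of_pathFive hab hbc hcd hde hP h6 hx),
    if_neg (not_adj_last_of_pathFive hab hbc hcd hde hP h6 hx)]
  split_ifs <;> tauto

theorem degree_eq_one_of_pathFive_of_adj_center [Fintype V] [DecidableRel G.Adj]
    (hab : G.Adj a b) (hbc : G.Adj b c) (hcd : G.Adj c d) (hde : G.Adj d e)
    (hP : [a, b, c, d, e].Nodup) (h6 : ¬ Contains G (pathGraph 6)) (hx : x ∉ [a, b, c, d, e])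
    (hy : y ∉ [a, b, c, d, e]) (hz : z ∉ [a, b, c, d, e]) (hxc : G.Adj x c) (hxy : G.Adj x y)
    (hxz : G.Adj x z) (hyz : y ≠ z) : G.degree y = 1 := by
  refine card_eq_one.mpr ⟨x, eq_singleton_iff_unique_mem.mpr ⟨by simpa using hxy.symm, ?_⟩⟩
  intro w hyw
  rw [mem_neighborFinset] at hyw
  by_contra hwx
  have := hxy.ne; have := hxz.ne
  rcases eq_center_or_not_mem_of_pathFive_of_adj_not_mem hab hbc hcd hde hP h6 hy hx hxy.symm
    hyw with rfl | hw
  · exact h6 (contains_pathGraph_of_isChain (l := [z, x, y, w, d, e])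
      (by simp [hxz.symm, hxy, hyw, hcd, hde]) (by grind))
  · exact h6 (contains_pathGraph_of_isChain (l := [w, y, x, c, d, e])
      (by simp [hyw.symm, hxy.symm, hxc, hcd, hde]) (by have := hyw.ne; grind))

theorem not_mem_and_degree_eq_one_of_pathFive [Fintype V] [DecidableRel G.Adj]
    (hG : G.Preconnected) (hab : G.Adj a b) (hbc : G.Adj b c) (hcd : G.Adj c d)
    (hde : G.Adj d e) (hP : [a, b, c, d, e].Nodup) (h6 : ¬ Contains G (pathGraph 6))
    (hx : x ∉ [a, b, c, d, e]) (hdeg : 3 ≤ G.degree x) (hxy : G.Adj x y) (hyc : y ≠ c) :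
    y ∉ [a, b, c, d, e] ∧ G.degree y = 1 := by
  classical
  obtain ⟨r, hr, hxr⟩ : ∃ r ∉ [a, b, c, d, e], G.Adj x r := by
    by_contra! h
    have hsub : G.neighborFinset x ⊆ {w ∈ [a, b, c, d, e].toFinset | G.Adj x w} := fun w hw => by
      rw [mem_neighborFinset] at hw
      exact mem_filter.mpr ⟨List.mem_toFinset.mpr (by_contra fun hwP => h w hwP hw), hw⟩
    have := (card_le_card hsub).trans (card_filter_adj_le_two_of_pathFive hab hbc hcd hde hP h6 hx)
    rw [card_neighborFinset_eq_degree] at this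
    omega
  have hnbr w (hxw : G.Adj x w) : w = c ∨ w ∉ [a, b, c, d, e] :=
    eq_center_or_not_mem_of_pathFive_of_adj_not_mem hab hbc hcd hde hP h6 hx hr hxr hxw
  obtain ⟨y', hy', z', hz', hyz'⟩ := one_lt_card.mp (by
    have := pred_card_le_card_erase (s := G.neighborFinset x) (a := c)
    rw [card_neighborFinset_eq_degree] at this
    omega : 1 < #((G.neighborFinset x).erase c))
  simp only [mem_erase, mem_neighborFinset] at hy' hz'
  have hy'P := (hnbr y' hy'.2).resolve_left hy'.1
  have hz'P := (hnbr z' hz'.2).resolve_left hz'.1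
  have hxc : G.Adj x c := (adj_center_or_adj_center_of_pathFive hG hab hbc hcd hde hP h6 hx hy'P
    hy'.2).resolve_right fun hy'c => h6 (contains_pathGraph_of_isChain
      (l := [z', x, y', c, d, e]) (by simp [hz'.2.symm, hy'.2, hy'c, hcd, hde])
      (by have := hy'.2.ne; have := hz'.2.ne; grind))
  have hyP := (hnbr y hxy).resolve_left hyc
  refine ⟨hyP, ?_⟩
  by_cases hyy' : y = y'
  · subst hyy'
    exact degree_eq_one_of_pathFive_of_adj_center hab hbc hcd hde hP h6 hx hyP hz'P hxc hxy
      hz'.2 hyz'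
  · exact degree_eq_one_of_pathFive_of_adj_center hab hbc hcd hde hP h6 hx hyP hy'P hxc hxy
      hy'.2 hyy'

theorem sum_card_filter_adj_toFinset_five [DecidableEq V] [DecidableRel G.Adj]
    (hP : [a, b, c, d, e].Nodup) :
    ∑ v ∈ [a, b, c, d, e].toFinset, #{w ∈ [a, b, c, d, e].toFinset | G.Adj v w} =
      2 * ((if G.Adj a b then 1 else 0) + (if G.Adj a c then 1 else 0) +
        (if G.Adj a d then 1 else 0) + (if G.Adj a e then 1 else 0) +
        (if G.Adj b c then 1 else 0) + (if G.Adj b d then 1 else 0) +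
        (if G.Adj b e then 1 else 0) + (if G.Adj c d then 1 else 0) +
        (if G.Adj c e then 1 else 0) + (if G.Adj d e then 1 else 0)) := by
  simp only [card_filter, List.sum_toFinset _ hP, List.map_cons, List.map_nil, List.sum_cons,
    List.sum_nil, SimpleGraph.irrefl, if_false, adj_comm G b a, adj_comm G c a, adj_comm G d a,
    adj_comm G e a, adj_comm G c b, adj_comm G d b, adj_comm G e b, adj_comm G d c,
    adj_comm G e c, adj_comm G e d]
  ring

theorem sum_card_filter_adj_le_of_pathFive_of_adj_second [DecidableEq V] [DecidableRel G.Adj]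
    (hab : G.Adj a b) (hbc : G.Adj b c) (hcd : G.Adj c d) (hde : G.Adj d e)
    (hP : [a, b, c, d, e].Nodup) (h6 : ¬ Contains G (pathGraph 6)) (hx : x ∉ [a, b, c, d, e])
    (hxb : G.Adj x b) :
    ∑ v ∈ [a, b, c, d, e].toFinset, #{w ∈ [a, b, c, d, e].toFinset | G.Adj v w} ≤ 14 := by
  have hac : ¬ G.Adj a c := fun h => h6 (contains_pathGraph_of_isChain
    (l := [x, b, a, c, d, e]) (by simp [hxb, hab.symm, h, hcd, hde]) (by grind))
  have hae : ¬ G.Adj a e := fun h => h6 (contains_pathGraph_of_isChain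
    (l := [x, b, a, e, d, c]) (by simp [hxb, hab.symm, h, hde.symm, hcd.symm]) (by grind))
  have hadce : ¬ (G.Adj a d ∧ G.Adj c e) := fun h => h6 (contains_pathGraph_of_isChain
    (l := [x, b, a, d, c, e]) (by simp [hxb, hab.symm, h.1, hcd.symm, h.2]) (by grind))
  rw [sum_card_filter_adj_toFinset_five hP, if_neg hac, if_neg hae]
  split_ifs <;> simp_all

theorem sum_card_filter_adj_le_of_pathFive_of_adj_center [DecidableEq V] [DecidableRel G.Adj]
    (hab : G.Adj a b) (hbc : G.Adj b c) (hcd : G.Adj c d) (hde : G.Adj d e)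
    (hP : [a, b, c, d, e].Nodup) (h6 : ¬ Contains G (pathGraph 6)) (hx : x ∉ [a, b, c, d, e])
    (hxc : G.Adj x c) :
    ∑ v ∈ [a, b, c, d, e].toFinset, #{w ∈ [a, b, c, d, e].toFinset | G.Adj v w} ≤ 14 := by
  have hae : ¬ G.Adj a e := fun h => h6 (contains_pathGraph_of_isChain
    (l := [x, c, b, a, e, d]) (by simp [hxc, hbc.symm, hab.symm, h, hde.symm]) (by grind))
  have hbe : ¬ G.Adj b e := fun h => h6 (contains_pathGraph_of_isChain
    (l := [x, c, d, e, b, a]) (by simp [hxc, hcd, hde, h.symm, hab.symm]) (by grind))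
  have had : ¬ G.Adj a d := fun h => h6 (contains_pathGraph_of_isChain
    (l := [x, c, b, a, d, e]) (by simp [hxc, hbc.symm, hab.symm, h, hde]) (by grind))
  rw [sum_card_filter_adj_toFinset_five hP, if_neg hae, if_neg hbe, if_neg had]
  split_ifs <;> omega

theorem sum_card_filter_adj_le_of_pathFive [Fintype V] [DecidableEq V] [DecidableRel G.Adj]
    (hG : G.Preconnected) (hab : G.Adj a b) (hbc : G.Adj b c) (hcd : G.Adj c d)
    (hde : G.Adj d e) (hP : [a, b, c, d, e].Nodup) (h6 : ¬ Contains G (pathGraph 6))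
    (hn : 6 ≤ Fintype.card V) :
    ∑ v ∈ [a, b, c, d, e].toFinset, #{w ∈ [a, b, c, d, e].toFinset | G.Adj v w} ≤ 14 := by
  obtain ⟨x, hx⟩ : ∃ x, x ∉ [a, b, c, d, e] := by
    by_contra! h
    have := (card_le_card fun x (_ : x ∈ univ) => List.mem_toFinset.mpr (h x)).trans
      (List.toFinset_card_le _)
    simp only [card_univ, List.length_cons, List.length_nil] at this
    omega
  obtain ⟨p, q, hq, hpq, w, -, hout⟩ := hG.exists_path_avoiding_to_adj_mem
    (P := {z | z ∈ [a, b, c, d, e]}) (q₀ := a) (by simp) hx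
  have hp : p ∉ [a, b, c, d, e] := hout p w.start_mem_support
  simp only [Set.mem_ofPred_eq, List.mem_cons, List.not_mem_nil, or_false] at hq
  rcases hq with rfl | rfl | rfl | rfl | rfl
  · exact absurd hpq (not_adj_head_of_pathFive hab hbc hcd hde hP h6 hp)
  · exact sum_card_filter_adj_le_of_pathFive_of_adj_second hab hbc hcd hde hP h6 hp hpq
  · exact sum_card_filter_adj_le_of_pathFive_of_adj_center hab hbc hcd hde hP h6 hp hpq
  · have hrev : [e, q, c, b, a].toFinset = [a, b, c, q, e].toFinset := by ext; simp; tauto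
    simpa only [hrev] using sum_card_filter_adj_le_of_pathFive_of_adj_second hde.symm hcd.symm
      hbc.symm hab.symm (by grind) h6 (by grind) hpq
  · exact absurd hpq (not_adj_last_of_pathFive hab hbc hcd hde hP h6 hp)

theorem sum_degree_le_of_pathFive [Fintype V] [DecidableRel G.Adj] (hG : G.Preconnected)
    (hab : G.Adj a b) (hbc : G.Adj b c) (hcd : G.Adj c d) (hde : G.Adj d e)
    (hP : [a, b, c, d, e].Nodup) (h6 : ¬ Contains G (pathGraph 6))
    (hn : 6 ≤ Fintype.card V) : ∑ v, G.degree v ≤ 4 * Fintype.card V - 6 := by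
  classical
  set P := [a, b, c, d, e].toFinset
  have hPc : #Pᶜ = Fintype.card V - 5 := by rw [card_compl, List.toFinset_card_of_nodup hP]; rfl
  have hinner : ∑ v ∈ P, #{w ∈ P | G.Adj v w} ≤ 14 :=
    sum_card_filter_adj_le_of_pathFive hG hab hbc hcd hde hP h6 hn
  have hcross : ∑ v ∈ P, #{w ∈ Pᶜ | G.Adj v w} ≤ 2 * #Pᶜ := calc
    _ = ∑ w ∈ Pᶜ, #{v ∈ P | G.Adj v w} :=
      sum_card_bipartiteAbove_eq_sum_card_bipartiteBelow G.Adj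
    _ = ∑ w ∈ Pᶜ, #{v ∈ P | G.Adj w v} := by simp_rw [adj_comm]
    _ ≤ ∑ w ∈ Pᶜ, 2 := sum_le_sum fun w hw =>
      card_filter_adj_le_two_of_pathFive hab hbc hcd hde hP h6 (by simpa [P] using hw)
    _ = 2 * #Pᶜ := by rw [sum_const, smul_eq_mul, mul_comm]
  have houter : ∑ x ∈ Pᶜ, G.degree x ≤ 2 * #Pᶜ := by
    refine sum_degree_le_two_mul_card_of_pendant Pᶜ fun x hx hdeg => ?_
    have hx' : x ∉ [a, b, c, d, e] := by simpa [P] using hx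
    have hsub : (G.neighborFinset x).erase c ⊆ {y ∈ Pᶜ | G.degree y = 1 ∧ G.Adj x y} := by
      intro y hy
      rw [mem_erase, mem_neighborFinset] at hy
      have := not_mem_and_degree_eq_one_of_pathFive hG hab hbc hcd hde hP h6 hx' hdeg hy.2 hy.1
      simpa [P, this.2, hy.2] using this.1
    have := (pred_card_le_card_erase (s := G.neighborFinset x) (a := c)).trans (card_le_card hsub)
    rw [card_neighborFinset_eq_degree] at this
    omega
  have hdeg v : G.degree v = #{w ∈ P | G.Adj v w} + #{w ∈ Pᶜ | G.Adj v w} := by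
    rw [← card_union_of_disjoint (disjoint_filter_filter disjoint_compl_right), ← filter_union,
      union_compl, ← card_neighborFinset_eq_degree, neighborFinset_eq_filter]
  rw [← sum_add_sum_compl P, sum_congr rfl fun v _ => hdeg v, sum_add_distrib]
  omega

end PathFive

theorem sum_degree_le_of_preconnected [Fintype V] [DecidableRel G.Adj] (hG : G.Preconnected)
    (hn : 6 ≤ Fintype.card V) (h6 : ¬ Contains G (pathGraph 6)) :
    ∑ v, G.degree v ≤ 4 * Fintype.card V - 6 := by
  have step {k : ℕ} (f : pathGraph k →g G) (i : ℕ) (h : i + 1 < k) :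
      G.Adj (f ⟨i, by omega⟩) (f ⟨i + 1, h⟩) := f.map_adj (pathGraph_adj.mpr (.inl rfl))
  by_cases h5 : Contains G (pathGraph 5)
  · obtain ⟨f, hf⟩ := h5
    exact sum_degree_le_of_pathFive hG (step f 0 (by norm_num)) (step f 1 (by norm_num))
      (step f 2 (by norm_num)) (step f 3 (by norm_num)) (List.nodup_ofFn.mpr hf) h6 hn
  by_cases h4 : Contains G (pathGraph 4)
  · obtain ⟨f, hf⟩ := h4
    have := sum_degree_le_of_pathFour hG (step f 0 (by norm_num)) (step f 1 (by norm_num))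
      (step f 2 (by norm_num)) (List.nodup_ofFn.mpr hf) h5
    omega
  by_cases h3 : Contains G (pathGraph 3)
  · obtain ⟨f, hf⟩ := h3
    exact sum_degree_le_of_pathThree hG (step f 0 (by norm_num)) (step f 1 (by norm_num))
      (List.nodup_ofFn.mpr hf) h4
  have := sum_le_card_nsmul univ (fun v => G.degree v) 1 fun v _ =>
    degree_le_one_of_not_contains_pathGraph_three h3 v
  simp only [card_univ, smul_eq_mul, mul_one] at this
  omega

theorem card_edgeFinset_eq_induce_add_induce_compl [Fintype V] [DecidableEq V]
    [DecidableRel G.Adj] (s : Finset V) (hs : ∀ x y, G.Adj x y → x ∈ s → y ∈ s) :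
    #G.edgeFinset = #(G.induce s).edgeFinset + #(G.induce ↑sᶜ).edgeFinset := by
  rw [← card_filter_edgeFinset_toFinset_subset s, ← card_filter_edgeFinset_toFinset_subset sᶜ,
    ← card_filter_add_card_filter_not (s := G.edgeFinset) fun e => e.toFinset ⊆ s]
  refine congrArg (_ + ·) (congrArg card (filter_congr fun e he => ?_))
  induction e using Sym2.ind with
  | h x y =>
    have hxy : G.Adj x y := by simpa using he
    have := hs x y hxy
    have := hs y x hxy.symm
    simp only [Sym2.toFinset_mk_eq, insert_subset_iff, singleton_subset_iff, mem_compl]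
    tauto

theorem card_edgeFinset_le_exPathSix [Fintype V] [DecidableRel G.Adj]
    (h6 : ¬ Contains G (pathGraph 6)) : #G.edgeFinset ≤ exPathSix (Fintype.card V) := by
  induction hn : Fintype.card V using Nat.strong_induction_on generalizing V with
  | _ n ih =>
  classical
  by_cases hsmall : n ≤ 5
  · exact G.card_edgeFinset_le_card_choose_two.trans
      (by rw [hn]; exact choose_two_le_exPathSix hsmall)
  by_cases hG : G.Preconnected
  · have := sum_degree_le_of_preconnected hG (by omega) h6
    have := two_mul_sub_three_le_exPathSix (n := n) (by omega)
    rw [sum_degrees_eq_twice_card_edges] at *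
    omega
  obtain ⟨u, v, huv⟩ : ∃ u v, ¬ G.Reachable u v := by simpa [Preconnected] using hG
  set s : Finset V := {w | G.Reachable u w}
  have hs : 0 < #s := card_pos.mpr ⟨u, by simp [s]⟩
  have hsc : 0 < #sᶜ := card_pos.mpr ⟨v, by simpa [s] using huv⟩
  have hcard : #s + #sᶜ = n := by rw [card_compl, ← hn]; have := card_le_univ s; omega
  rw [card_edgeFinset_eq_induce_add_induce_compl s fun x y hxy hx => by
    simpa [s] using (by simpa [s] using hx : G.Reachable u x).trans hxy.reachable]
  have h₁ := ih #s (by omega) (G := G.induce s) (fun h => h6 h.of_induce) (Fintype.card_coe s)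
  have h₂ := ih #sᶜ (by omega) (G := G.induce ↑sᶜ) (fun h => h6 h.of_induce)
    (Fintype.card_coe sᶜ)
  have := exPathSix_add_le hs hsc
  rw [hcard] at this
  omega

def blockGraph (k n : ℕ) : SimpleGraph (Fin n) :=
  SimpleGraph.fromRel fun u v => (u : ℕ) / k = v / k

theorem blockGraph_adj {k n : ℕ} {u v : Fin n} :
    (blockGraph k n).Adj u v ↔ u ≠ v ∧ (u : ℕ) / k = v / k := by
  simp [blockGraph, eq_comm]

instance (k n : ℕ) : DecidableRel (blockGraph k n).Adj :=
  fun _ _ => decidable_of_iff _ blockGraph_adj.symm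

theorem not_contains_pathGraph_blockGraph {k : ℕ} (hk : 0 < k) (n : ℕ) :
    ¬ Contains (blockGraph k n) (pathGraph (k + 1)) := by
  rintro ⟨f, hf⟩
  have hblock (i : Fin (k + 1)) : (f i : ℕ) / k = (f 0 : ℕ) / k := by
    induction i using Fin.induction with
    | zero => rfl
    | succ i ih =>
      have hi : (pathGraph (k + 1)).Adj i.castSucc i.succ := pathGraph_adj.mpr (.inl rfl)
      rw [← ih, ← (blockGraph_adj.mp (f.map_adj hi)).2]
  have hinj : Function.Injective fun i => (⟨(f i : ℕ) % k, Nat.mod_lt _ hk⟩ : Fin k) := by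
    intro i j hij
    refine hf (Fin.ext ?_)
    rw [← Nat.div_add_mod (f i : ℕ) k, ← Nat.div_add_mod (f j : ℕ) k, hblock i, hblock j]
    simpa using hij
  simpa using Fintype.card_le_of_injective _ hinj

theorem filter_range_lt_div_eq {k v n : ℕ} (hv : v < n) :
    {u ∈ range n | u < v ∧ u / k = v / k} = Ico (k * (v / k)) v := by
  ext u
  simp only [mem_filter, mem_range, mem_Ico]
  constructor
  · rintro ⟨-, huv, hdiv⟩
    exact ⟨hdiv ▸ Nat.mul_div_le u k, huv⟩
  · rintro ⟨hle, huv⟩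
    refine ⟨huv.trans hv, huv, le_antisymm (Nat.div_le_div_right huv.le) ?_⟩
    rcases k.eq_zero_or_pos with rfl | hk
    · simp
    · exact (Nat.le_div_iff_mul_le hk).mpr (by rwa [mul_comm])

theorem card_edgeFinset_blockGraph (k n : ℕ) :
    #(blockGraph k n).edgeFinset = ∑ j ∈ range n, j % k := by
  have hdeg (v : Fin n) : (blockGraph k n).degree v =
      ∑ u, if (blockGraph k n).Adj v u then 1 else 0 := by
    exact_mod_cast (blockGraph k n).degree_eq_sum_if_adj (R := ℕ) v
  have hsplit (u v : Fin n) : (if (blockGraph k n).Adj v u then 1 else 0) =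
      (if (u : ℕ) < v ∧ (u : ℕ) / k = v / k then 1 else 0) +
        (if (v : ℕ) < u ∧ (v : ℕ) / k = u / k then 1 else 0) := by
    simp only [blockGraph_adj, ne_eq, Fin.ext_iff]
    split_ifs <;> omega
  have hswap : (∑ v : Fin n, ∑ u : Fin n, if (v : ℕ) < u ∧ (v : ℕ) / k = u / k then 1 else 0) =
      ∑ v : Fin n, ∑ u : Fin n, if (u : ℕ) < v ∧ (u : ℕ) / k = v / k then 1 else 0 := sum_comm
  have hrow (v : Fin n) : ∑ u : Fin n, (if (u : ℕ) < v ∧ (u : ℕ) / k = v / k then 1 else 0) =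
      (v : ℕ) % k := by
    rw [Fin.sum_univ_eq_sum_range (fun u => if u < v ∧ u / k = v / k then 1 else 0),
      ← card_filter, filter_range_lt_div_eq v.isLt, Nat.card_Ico, Nat.mod_eq_sub_mul_div]
  have := (blockGraph k n).sum_degrees_eq_twice_card_edges
  simp only [hdeg, hsplit, sum_add_distrib] at this
  rw [hswap] at this
  simp only [hrow, Fin.sum_univ_eq_sum_range (· % k)] at this
  omega

end SimpleGraph

theorem extremal_number_P6_general (n : ℕ) :
    IsGreatest {m | ∃ G : SimpleGraph (Fin n),
        ¬ Contains G (SimpleGraph.pathGraph 6) ∧ G.edgeSet.ncard = m}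
      (if n % 5 = 0 then 2 * n
       else if n % 5 = 1 ∨ n % 5 = 4 then 2 * n - 2
       else 2 * n - 3) := by
  classical
  show IsGreatest _ (exPathSix n)
  refine ⟨⟨blockGraph 5 n, not_contains_pathGraph_blockGraph (by norm_num) n, ?_⟩, ?_⟩
  · rw [← coe_edgeFinset, Set.ncard_coe_finset, card_edgeFinset_blockGraph,
      ← exPathSix_eq_sum_mod]
  · rintro m ⟨G, hG, rfl⟩
    rw [← coe_edgeFinset, Set.ncard_coe_finset]
    simpa using G.card_edgeFinset_le_exPathSix hG

theorem extremal_number_P6 (n : ℕ) (hn : 3 ≤ n) :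
    IsGreatest {m | ∃ G : SimpleGraph (Fin n),
        ¬ Contains G (SimpleGraph.pathGraph 6) ∧ G.edgeSet.ncard = m}
      (if n % 5 = 0 then 2 * n
       else if n % 5 = 1 ∨ n % 5 = 4 then 2 * n - 2
       else 2 * n - 3) :=
  extremal_number_P6_general n
end

section
/- Let m ≥ 7 and suppose the edges of K_{m+2} are 3-colored green, red, blue such that the blue subgraph contains a path on m-1 vertices. Then K_{m+2} contains a green P_3, a red P_7, or a blue P_m. -/
open SimpleGraph

/-!
Assume there is no green `P₃`, red `P₇` or blue `Pₘ`. Then the green edges form a matching, and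
the blue path `e₀ v₁ v₂ v₃ v₄ … e₁` on `m - 1` vertices cannot be extended, so none of the three
vertices outside it is blue-adjacent to an end of it or to two consecutive vertices of it.
Both ends therefore send red edges to two of the outside vertices, giving a red path `x e₀ y e₁ z`
through the outside vertices `x, y, z`, and every outside vertex has a red neighbour among
`v₁, …, v₄`. If `w` is such a neighbour of `z`, avoiding a red `P₇` forces it to be one of `x`, so
`x e₀ y e₁ z w` is a red hexagon and no other red edge can leave `x`, `y` or `z`. The pair
`v₁ v₂` or `v₃ v₄` avoiding `w` then sends only green and blue edges to `x, y, z`, so its two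
vertices share a blue neighbour among them, and the blue path could be extended after all.
-/
section

variable {V : Type*} {G H R B : SimpleGraph V}

theorem contains_pathGraph_iff {n : ℕ} :
    Contains G (pathGraph n) ↔ ∃ l : List V, l.length = n ∧ l.Nodup ∧ l.IsChain G.Adj := by
  constructor
  · rintro ⟨f, hf⟩
    refine ⟨List.ofFn f, List.length_ofFn, List.nodup_ofFn.2 hf, List.isChain_ofFn.2 ?_⟩
    intro i hi
    exact f.map_adj (pathGraph_adj.2 (Or.inl rfl))
  · rintro ⟨l, rfl, hnd, hch⟩
    refine ⟨⟨fun i => l[i], fun {i j} hij => ?_⟩, fun i j h => Fin.ext (hnd.getElem_inj_iff.1 h)⟩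
    rcases pathGraph_adj.1 hij with h | h
    · simpa [← h] using hch.getElem i (by omega)
    · simpa [← h] using (hch.getElem j (by omega)).symm

theorem eq_of_adj_of_adj_of_not_contains_pathGraph_three
    (hG : ¬Contains G (pathGraph 3)) {u v w : V} (huv : G.Adj u v) (huw : G.Adj u w) : v = w := by
  by_contra hvw
  exact hG (contains_pathGraph_iff.2
    ⟨[v, u, w], rfl, by simp [hvw, huv.ne', huw.ne], by simp [huv.symm, huw]⟩)

theorem contains_pathGraph_insert {l₁ l₂ : List V} {t : V}
    (hnd : (l₁ ++ l₂).Nodup) (hch : (l₁ ++ l₂).IsChain G.Adj) (ht : t ∉ l₁ ++ l₂)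
    (h₁ : ∀ x ∈ l₁.getLast?, G.Adj x t) (h₂ : ∀ y ∈ l₂.head?, G.Adj t y) :
    Contains G (pathGraph ((l₁ ++ l₂).length + 1)) := by
  refine contains_pathGraph_iff.2
    ⟨l₁ ++ t :: l₂, by simp; omega, List.nodup_middle.2 (List.nodup_cons.2 ⟨ht, hnd⟩), ?_⟩
  obtain ⟨hc₁, hc₂, -⟩ := List.isChain_append.1 hch
  exact hc₁.append (List.isChain_cons.2 ⟨h₂, hc₂⟩) (by simpa using h₁)

theorem exists_mem_adj_adj_of_adj_or_adj (hG : ∀ ⦃u v w⦄, G.Adj u v → G.Adj u w → v = w)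
    {u₁ u₂ a b d : V} (hab : a ≠ b) (had : a ≠ d) (hbd : b ≠ d)
    (h : ∀ u ∈ [u₁, u₂], ∀ t ∈ [a, b, d], G.Adj u t ∨ H.Adj u t) :
    ∃ t ∈ [a, b, d], H.Adj u₁ t ∧ H.Adj u₂ t := by
  by_contra! hne
  have key : ∀ t ∈ [a, b, d], G.Adj u₁ t ∨ G.Adj u₂ t := fun t ht => by
    have := hne t ht
    have := h u₁ (by simp) t ht
    have := h u₂ (by simp) t ht
    tauto
  simp only [List.mem_cons, List.not_mem_nil, or_false, forall_eq_or_imp, forall_eq] at key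
  obtain ⟨ha, hb, hd⟩ := key
  -- The green neighbour of `a` among `u₁, u₂` is green to neither `b` nor `d`, so the other one
  -- is green to both.
  rcases ha with ha | ha
  · exact hbd (hG (hb.resolve_left fun h => hab (hG ha h))
      (hd.resolve_left fun h => had (hG ha h)))
  · exact hbd (hG (hb.resolve_right fun h => hab (hG ha h))
      (hd.resolve_right fun h => had (hG ha h)))

theorem adj_and_adj_or_adj_and_adj (hG : ∀ ⦃u v w⦄, G.Adj u v → G.Adj u w → v = w)
    {e₀ e₁ p q : V} (he : e₀ ≠ e₁) (hpq : p ≠ q)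
    (h : ∀ e ∈ [e₀, e₁], ∀ t ∈ [p, q], G.Adj e t ∨ H.Adj e t) :
    (H.Adj e₀ p ∧ H.Adj e₁ q) ∨ (H.Adj e₀ q ∧ H.Adj e₁ p) := by
  by_contra hne
  simp only [List.mem_cons, List.not_mem_nil, or_false, forall_eq_or_imp, forall_eq] at h
  have h₁ : G.Adj e₀ p ∨ G.Adj e₁ q := by tauto
  have h₂ : G.Adj e₀ q ∨ G.Adj e₁ p := by tauto
  rcases h₁ with h₁ | h₁ <;> rcases h₂ with h₂ | h₂
  · exact hpq (hG h₁ h₂)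
  · exact he (hG h₁.symm h₂.symm)
  · exact he (hG h₂.symm h₁.symm)
  · exact hpq (hG h₂ h₁)

theorem exists_adj_adj_adj_adj_of_adj_or_adj (hG : ∀ ⦃u v w⦄, G.Adj u v → G.Adj u w → v = w)
    {e₀ e₁ a b d : V} (he : e₀ ≠ e₁) (hab : a ≠ b) (had : a ≠ d) (hbd : b ≠ d)
    (h : ∀ e ∈ [e₀, e₁], ∀ t ∈ [a, b, d], G.Adj e t ∨ H.Adj e t) :
    ∃ x ∈ [a, b, d], ∃ y ∈ [a, b, d], ∃ z ∈ [a, b, d], [x, y, z].Nodup ∧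
      H.Adj e₀ x ∧ H.Adj e₀ y ∧ H.Adj e₁ y ∧ H.Adj e₁ z := by
  obtain ⟨y, hy, hy₀, hy₁⟩ := exists_mem_adj_adj_of_adj_or_adj hG hab had hbd h
  have key : ∀ p ∈ [a, b, d], ∀ q ∈ [a, b, d], [y, p, q].Nodup → ∃ x ∈ [a, b, d],
      ∃ y ∈ [a, b, d], ∃ z ∈ [a, b, d], [x, y, z].Nodup ∧
        H.Adj e₀ x ∧ H.Adj e₀ y ∧ H.Adj e₁ y ∧ H.Adj e₁ z := by
    intro p hp q hq hnd
    have hpq : p ≠ q := by simp at hnd; tauto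
    rcases adj_and_adj_or_adj_and_adj hG he hpq
        (fun e he t ht => h e he t (by simp at ht; rcases ht with rfl | rfl <;> assumption))
      with ⟨hp₀, hq₁⟩ | ⟨hq₀, hp₁⟩
    · exact ⟨p, hp, y, hy, q, hq, by simp at hnd ⊢; tauto, hp₀, hy₀, hy₁, hq₁⟩
    · exact ⟨q, hq, y, hy, p, hp, by simp at hnd ⊢; tauto, hq₀, hy₀, hy₁, hp₁⟩
  simp only [List.mem_cons, List.not_mem_nil, or_false] at hy
  rcases hy with rfl | rfl | rfl
  · exact key b (by simp) d (by simp) (by simp [*])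
  · exact key a (by simp) d (by simp) (by simp [*, Ne.symm hab])
  · exact key a (by simp) b (by simp) (by simp [*, Ne.symm had, Ne.symm hbd])

theorem adj_or_adj_of_not_adj_of_not_adj
    (hcover : ∀ ⦃u w⦄, u ≠ w → G.Adj u w ∨ R.Adj u w ∨ B.Adj u w)
    (hG : ∀ ⦃u v w⦄, G.Adj u v → G.Adj u w → v = w) {u u' t : V}
    (hu : u ≠ t) (hu' : u' ≠ t) (huu' : u ≠ u') (hb : ¬B.Adj u t) (hb' : ¬B.Adj u' t) :
    R.Adj u t ∨ R.Adj u' t := by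
  rcases hcover hu with hg | hr | hb₀
  · rcases hcover hu' with hg' | hr' | hb₀'
    · exact absurd (hG hg.symm hg'.symm) huu'
    · exact Or.inr hr'
    · exact absurd hb₀' hb'
  · exact Or.inl hr
  · exact absurd hb₀ hb

theorem exists_mem_adj_of_not_adj_and_adj
    (hcover : ∀ ⦃u w⦄, u ≠ w → G.Adj u w ∨ R.Adj u w ∨ B.Adj u w)
    (hG : ∀ ⦃u v w⦄, G.Adj u v → G.Adj u w → v = w) {v₁ v₂ v₃ v₄ t : V}
    (hnd : [v₁, v₂, v₃, v₄, t].Nodup)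
    (h₁₂ : ¬(B.Adj v₁ t ∧ B.Adj v₂ t)) (h₃₄ : ¬(B.Adj v₃ t ∧ B.Adj v₄ t)) :
    ∃ w ∈ [v₁, v₂, v₃, v₄], R.Adj w t := by
  simp only [List.nodup_cons, List.mem_cons, List.not_mem_nil, or_false, not_or] at hnd
  rcases not_and_or.1 h₁₂ with h | h <;> rcases not_and_or.1 h₃₄ with h' | h' <;>
    rcases adj_or_adj_of_not_adj_of_not_adj hcover hG (by tauto) (by tauto) (by tauto) h h'
      with hr | hr <;>
    exact ⟨_, by simp, hr⟩

theorem contains_pathGraph_seven_of_adj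
    (hcover : ∀ ⦃u w⦄, u ≠ w → G.Adj u w ∨ R.Adj u w ∨ B.Adj u w)
    (hG : ∀ ⦃u v w⦄, G.Adj u v → G.Adj u w → v = w) {e₀ v₁ v₂ v₃ v₄ e₁ x y z : V}
    (hnd : [e₀, v₁, v₂, v₃, v₄, e₁, x, y, z].Nodup)
    (hB : ∀ t ∈ [x, y, z], ¬(B.Adj v₁ t ∧ B.Adj v₂ t) ∧ ¬(B.Adj v₃ t ∧ B.Adj v₄ t))
    (hx : R.Adj e₀ x) (hy₀ : R.Adj e₀ y) (hy₁ : R.Adj e₁ y) (hz : R.Adj e₁ z) :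
    Contains R (pathGraph 7) := by
  simp only [List.nodup_cons, List.mem_cons, List.not_mem_nil, or_false, not_or] at hnd
  have hred : ∀ t ∈ [x, y, z], ∃ w ∈ [v₁, v₂, v₃, v₄], R.Adj w t := fun t ht =>
    exists_mem_adj_of_not_adj_and_adj hcover hG (by simp at ht ⊢; grind) (hB t ht).1 (hB t ht).2
  obtain ⟨w, hw, hwz⟩ := hred z (by simp)
  have hw' : w ≠ e₀ ∧ w ≠ e₁ ∧ w ≠ x ∧ w ≠ y ∧ w ≠ z := by simp at hw; grind
  by_contra hR
  have hpath : ∀ l : List V, l.length = 7 → l.Nodup → ¬l.IsChain R.Adj :=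
    fun l hl hnd hch => hR (hl ▸ contains_pathGraph_iff.2 ⟨l, rfl, hnd, hch⟩)
  have hxw : R.Adj w x := by
    obtain ⟨w', hw', hw'x⟩ := hred x (by simp)
    by_contra hne
    have : w' ≠ w := by rintro rfl; exact hne hw'x
    exact hpath [w', x, e₀, y, e₁, z, w] rfl (by simp at hw' ⊢; grind)
      (by simp [hw'x, hx.symm, hy₀, hy₁.symm, hz, hwz.symm])
  -- `x e₀ y e₁ z w` is now a red hexagon, so a red edge leaving it at `x`, `y` or `z` makes a `P₇`.
  have hfree : ∀ u ∉ [x, e₀, y, e₁, z, w], ∀ t ∈ [x, y, z], ¬R.Adj u t := by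
    intro u hu t ht hut
    simp only [List.mem_cons, List.not_mem_nil, or_false, not_or] at hu ht
    rcases ht with rfl | rfl | rfl
    · exact hpath [u, t, e₀, y, e₁, z, w] rfl (by simp; grind)
        (by simp [hut, hx.symm, hy₀, hy₁.symm, hz, hwz.symm])
    · exact hpath [u, t, e₀, x, w, z, e₁] rfl (by simp; grind)
        (by simp [hut, hx, hy₀.symm, hxw.symm, hwz, hz.symm])
    · exact hpath [u, t, e₁, y, e₀, x, w] rfl (by simp; grind)
        (by simp [hut, hz.symm, hy₁, hy₀.symm, hx, hxw.symm])
  obtain ⟨u₁, u₂, hu, hu₁, hu₂, hB'⟩ : ∃ u₁ u₂, u₁ ≠ u₂ ∧ u₁ ∉ [x, e₀, y, e₁, z, w] ∧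
      u₂ ∉ [x, e₀, y, e₁, z, w] ∧ ∀ t ∈ [x, y, z], ¬(B.Adj u₁ t ∧ B.Adj u₂ t) := by
    by_cases hw₁₂ : w = v₁ ∨ w = v₂
    · exact ⟨v₃, v₄, by simp; grind, by simp; grind, by simp; grind, fun t ht => (hB t ht).2⟩
    · exact ⟨v₁, v₂, by simp; grind, by simp; grind, by simp; grind, fun t ht => (hB t ht).1⟩
  have hGB : ∀ u ∈ [u₁, u₂], ∀ t ∈ [x, y, z], G.Adj u t ∨ B.Adj u t := by
    intro u hu t ht
    have hut : u ∉ [x, e₀, y, e₁, z, w] := by simp at hu; rcases hu with rfl | rfl <;> assumption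
    have hne : u ≠ t := by rintro rfl; simp at hut ht; tauto
    exact (hcover hne).imp_right fun h => h.resolve_left (hfree u hut t ht)
  obtain ⟨t, ht, hb₁, hb₂⟩ := exists_mem_adj_adj_of_adj_or_adj hG (by grind) (by grind) (by grind) hGB
  exact hB' t ht ⟨hb₁, hb₂⟩

theorem contains_pathGraph_seven_of_maximal_path
    (hcover : ∀ ⦃u w⦄, u ≠ w → G.Adj u w ∨ R.Adj u w ∨ B.Adj u w)
    (hG : ∀ ⦃u v w⦄, G.Adj u v → G.Adj u w → v = w) {p : List V} (hnd : p.Nodup)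
    (hch : p.IsChain B.Adj) (hlen : 6 ≤ p.length) (hmax : ¬Contains B (pathGraph (p.length + 1)))
    {a b d : V} (hab : a ≠ b) (had : a ≠ d) (hbd : b ≠ d) (hout : ∀ t ∈ [a, b, d], t ∉ p) :
    Contains R (pathGraph 7) := by
  have hins : ∀ l₁ l₂, l₁ ++ l₂ = p → ∀ t ∈ [a, b, d],
      ¬((∀ x ∈ l₁.getLast?, B.Adj x t) ∧ ∀ y ∈ l₂.head?, B.Adj t y) := by
    rintro l₁ l₂ rfl t ht ⟨h₁, h₂⟩
    exact hmax (contains_pathGraph_insert hnd hch (hout t ht) h₁ h₂)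
  obtain ⟨e₀, v₁, v₂, v₃, v₄, q, e₁, rfl⟩ :
      ∃ e₀ v₁ v₂ v₃ v₄ q e₁, p = e₀ :: v₁ :: v₂ :: v₃ :: v₄ :: (q ++ [e₁]) := by
    match p, hlen with
    | e₀ :: v₁ :: v₂ :: v₃ :: v₄ :: r, hlen =>
      obtain ⟨q, e₁, rfl⟩ := (List.eq_nil_or_concat r).resolve_left (by rintro rfl; simp at hlen)
      exact ⟨e₀, v₁, v₂, v₃, v₄, q, e₁, by simp⟩
  have hB₀ : ∀ t ∈ [a, b, d], ¬B.Adj e₀ t := fun t ht h =>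
    hins [] _ rfl t ht ⟨by simp, by simpa using h.symm⟩
  have hB₁ : ∀ t ∈ [a, b, d], ¬B.Adj e₁ t := fun t ht h =>
    hins _ [] (List.append_nil _) t ht ⟨by simpa [List.getLast?_cons] using h, by simp⟩
  have hB : ∀ t ∈ [a, b, d], ¬(B.Adj v₁ t ∧ B.Adj v₂ t) ∧ ¬(B.Adj v₃ t ∧ B.Adj v₄ t) :=
    fun t ht => ⟨fun h => hins [e₀, v₁] _ rfl t ht ⟨by simpa using h.1, by simpa using h.2.symm⟩,
      fun h => hins [e₀, v₁, v₂, v₃] _ rfl t ht ⟨by simpa using h.1, by simpa using h.2.symm⟩⟩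
  have hGR : ∀ e ∈ [e₀, e₁], ∀ t ∈ [a, b, d], G.Adj e t ∨ R.Adj e t := by
    intro e he t ht
    have hne : e ≠ t := by rintro rfl; exact hout e ht (by simp at he ⊢; tauto)
    simp only [List.mem_cons, List.not_mem_nil, or_false] at he
    rcases he with rfl | rfl
    · exact (hcover hne).imp_right fun h => h.resolve_right (hB₀ t ht)
    · exact (hcover hne).imp_right fun h => h.resolve_right (hB₁ t ht)
  obtain ⟨x, hx, y, hy, z, hz, hxyz, hx₀, hy₀, hy₁, hz₁⟩ :=
    exists_adj_adj_adj_adj_of_adj_or_adj hG (by simp at hnd; grind) hab had hbd hGR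
  refine contains_pathGraph_seven_of_adj hcover hG (v₁ := v₁) (v₂ := v₂) (v₃ := v₃) (v₄ := v₄)
    ?_ ?_ hx₀ hy₀ hy₁ hz₁
  · have := hout x hx
    have := hout y hy
    have := hout z hz
    simp at hnd hxyz this ⊢
    grind
  · intro t ht
    simp only [List.mem_cons, List.not_mem_nil, or_false] at ht
    rcases ht with rfl | rfl | rfl <;> exact hB _ ‹_›

end

theorem colorClass_adj {N k : ℕ} {c : Sym2 (Fin N) → Fin k} {i : Fin k} {u w : Fin N} :
    (colorClass c i).Adj u w ↔ u ≠ w ∧ c s(u, w) = i := by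
  simp [colorClass, Sym2.eq_swap]

theorem colorClass_adj_or_adj_or_adj {N : ℕ} (c : Sym2 (Fin N) → Fin 3) ⦃u w : Fin N⦄
    (h : u ≠ w) :
    (colorClass c 0).Adj u w ∨ (colorClass c 1).Adj u w ∨ (colorClass c 2).Adj u w := by
  simp only [colorClass_adj, ne_eq, h, not_false_eq_true, true_and]
  generalize c s(u, w) = i
  fin_cases i <;> simp

theorem blue_Pm_minus_one_extension (m : ℕ) (hm : 7 ≤ m)
    (c : Sym2 (Fin (m + 2)) → Fin 3)
    (hblue : Contains (colorClass c 2) (SimpleGraph.pathGraph (m - 1))) :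
    Contains (colorClass c 0) (SimpleGraph.pathGraph 3) ∨
    Contains (colorClass c 1) (SimpleGraph.pathGraph 7) ∨
    Contains (colorClass c 2) (SimpleGraph.pathGraph m) := by
  by_contra! ⟨hg, hr, hb⟩
  obtain ⟨p, hlen, hnd, hch⟩ := contains_pathGraph_iff.1 hblue
  have hcard : (p.toFinset)ᶜ.card = 3 := by
    rw [Finset.card_compl, List.toFinset_card_of_nodup hnd, Fintype.card_fin]
    omega
  obtain ⟨a, b, d, hab, had, hbd, hcompl⟩ := Finset.card_eq_three.1 hcard
  have hout : ∀ t ∈ [a, b, d], t ∉ p := fun t ht => by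
    have : t ∈ (p.toFinset)ᶜ := by rw [hcompl]; simpa using ht
    simpa using this
  exact hr (contains_pathGraph_seven_of_maximal_path (colorClass_adj_or_adj_or_adj c)
    (fun _ _ _ => eq_of_adj_of_adj_of_not_contains_pathGraph_three hg) hnd hch (by omega)
    (by rwa [hlen, Nat.sub_add_cancel (by omega)]) hab had hbd hout)
end
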